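/- Let G be a finite group whose commutator subgroup G′ is 2-nilpotent (i.e. G′ has a normal 2-complement). Then the real core R(G), the subgroup generated by all real elements of odd order, has odd order. -/

import Mathlib

/-!
A real element `x` of odd order, say `g⁻¹ x g = x⁻¹`, satisfies `x² = ⁅x, g⁻¹⁆`, and `x` is a
power of `x²`; hence `x ∈ G′`. For the normal 2-complement `N` of `G′` we have
`x ^ |G′ : N| ∈ N`, and `x` is a power of `x ^ |G′ : N|` because the 2-power `|G′ : N|` is prime
to the order of `x`; so `x ∈ N`. Thus `R(G) ≤ N`, which has odd order.
-/

open scoped commutatorElement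

namespace Subgroup

variable {G : Type*} [Group G]

theorem mem_of_pow_mem_of_coprime {H : Subgroup G} {x : G} {n : ℕ}
    (hn : n.Coprime (orderOf x)) (hx : x ^ n ∈ H) : x ∈ H :=
  zpowers_le.2 hx (mem_zpowers_pow_iff.2 hn)

theorem mem_of_index_coprime_orderOf (H : Subgroup G) [H.Normal] {x : G}
    (h : H.index.Coprime (orderOf x)) : x ∈ H :=
  mem_of_pow_mem_of_coprime h (H.pow_index_mem x)

end Subgroup

section RealElement

variable {G : Type*} [Group G] {x g : G}

theorem mul_self_eq_commutatorElement_of_conj_eq_inv (h : g⁻¹ * x * g = x⁻¹) :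
    x * x = ⁅x, g⁻¹⁆ := by
  have hx : g⁻¹ * x⁻¹ * g = x := by simpa [mul_assoc] using congrArg (·⁻¹) h
  rw [commutatorElement_def, inv_inv, mul_assoc, mul_assoc, ← mul_assoc g⁻¹, hx]

theorem sq_mem_commutator_of_conj_eq_inv (h : g⁻¹ * x * g = x⁻¹) : x ^ 2 ∈ commutator G := by
  rw [sq, mul_self_eq_commutatorElement_of_conj_eq_inv h, commutator_def]
  exact Subgroup.commutator_mem_commutator (Subgroup.mem_top x) (Subgroup.mem_top g⁻¹)

theorem mem_commutator_of_conj_eq_inv_of_odd_orderOf (h : g⁻¹ * x * g = x⁻¹)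
    (hx : Odd (orderOf x)) : x ∈ commutator G :=
  Subgroup.mem_of_pow_mem_of_coprime hx.coprime_two_left (sq_mem_commutator_of_conj_eq_inv h)

end RealElement

theorem real_core_odd_of_commutator_two_nilpotent_general {G : Type*} [Group G]
    (h2nilp : ∃ N : Subgroup ↥(commutator G), N.Normal ∧ Odd (Nat.card N) ∧
      ∃ k : ℕ, N.index = 2 ^ k) :
    Odd (Nat.card
      (Subgroup.closure {x : G | Odd (orderOf x) ∧ ∃ g : G, g⁻¹ * x * g = x⁻¹})) := by
  obtain ⟨N, hN, hodd, k, hk⟩ := h2nilp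
  have hle : Subgroup.closure {x : G | Odd (orderOf x) ∧ ∃ g : G, g⁻¹ * x * g = x⁻¹}
      ≤ N.map (commutator G).subtype := by
    refine (Subgroup.closure_le _).2 ?_
    rintro x ⟨hx, g, hg⟩
    have hxG' := mem_commutator_of_conj_eq_inv_of_odd_orderOf hg hx
    refine ⟨⟨x, hxG'⟩, N.mem_of_index_coprime_orderOf ?_, rfl⟩
    rw [hk, Subgroup.orderOf_mk]
    exact hx.coprime_two_left.pow_left k
  rw [← Subgroup.card_map_of_injective (commutator G).subtype_injective] at hodd
  exact hodd.of_dvd_nat (Subgroup.card_dvd_of_le hle)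

/-- If the commutator subgroup of a finite group `G` is 2-nilpotent (has a normal
2-complement), then the real core of `G` — the subgroup generated by all real
elements of odd order — has odd order. -/
theorem real_core_odd_of_commutator_two_nilpotent {G : Type*} [Group G] [Finite G]
    (h2nilp : ∃ N : Subgroup ↥(commutator G), N.Normal ∧ Odd (Nat.card N) ∧
      ∃ k : ℕ, N.index = 2 ^ k) :
    Odd (Nat.card
      (Subgroup.closure {x : G | Odd (orderOf x) ∧ ∃ g : G, g⁻¹ * x * g = x⁻¹})) :=
  real_core_odd_of_commutator_two_nilpotent_general h2nilp
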